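/- arXiv:2605.23131 — 3 statements merged into one kernel-verified Lean document; each statement's English description precedes it below -/
import Mathlib

section
/- If A and B are symmetric positive definite matrices with B ⪯ A and det(A) ≤ α · det(B) for some α ≥ 1, then for every vector x, xᵀ B^{-1} x ≤ α · xᵀ A^{-1} x. -/
/-!
Write `A = R * R` with `R = A^{1/2}` and put `N = R⁻¹ * B * R⁻¹`. Then `0 ≤ N ≤ 1`, so the
eigenvalues of `N` lie in `[0, 1]` and each of them is at least their product
`det N = det B / det A ≥ α⁻¹`. Hence `α⁻¹ ≤ N`, i.e. `α⁻¹ • A ≤ B` in the Loewner order, and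
antitonicity of the matrix inverse gives `B⁻¹ ≤ α • A⁻¹`.
-/

open Matrix

open scoped MatrixOrder ComplexOrder

namespace Matrix

variable {𝕜 n : Type*} [RCLike 𝕜] [Fintype n] [DecidableEq n]

theorem PosDef.exists_isSelfAdjoint_mul_self_eq {A : Matrix n n 𝕜} (hA : A.PosDef) :
    ∃ R : Matrix n n 𝕜, IsSelfAdjoint R ∧ IsUnit R.det ∧ R * R = A := by
  have hRR : CFC.sqrt A * CFC.sqrt A = A := CFC.sqrt_mul_sqrt_self A hA.posSemidef.nonneg
  refine ⟨CFC.sqrt A, .of_nonneg (CFC.sqrt_nonneg A), ?_, hRR⟩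
  have hdet : IsUnit (CFC.sqrt A * CFC.sqrt A).det := by
    rw [hRR, ← isUnit_iff_isUnit_det]
    exact hA.isUnit
  rw [det_mul] at hdet
  exact isUnit_of_mul_isUnit_left hdet

theorem inv_mul_mul_self_mul_inv {R : Matrix n n 𝕜} (hR : IsUnit R.det) :
    R⁻¹ * (R * R) * R⁻¹ = 1 := by
  rw [← mul_assoc, nonsing_inv_mul _ hR, one_mul, mul_nonsing_inv _ hR]

theorem inv_eq_mul_inv_conj_mul {R : Matrix n n 𝕜} (hR : IsUnit R.det) (X : Matrix n n 𝕜) :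
    X⁻¹ = R * (R * X * R)⁻¹ * R := by
  rw [mul_inv_rev, mul_inv_rev, ← mul_assoc, ← mul_assoc, mul_nonsing_inv _ hR, one_mul,
    nonsing_inv_mul_cancel_right _ _ hR]

theorem inv_le_one_of_one_le {M : Matrix n n 𝕜} (hM : 1 ≤ M) : M⁻¹ ≤ 1 := by
  have hsa : IsSelfAdjoint M := .of_nonneg (zero_le_one.trans hM)
  have hspec : ∀ x ∈ spectrum ℝ M, 1 ≤ x := (CFC.one_le_iff M).1 hM
  have hunit : IsUnit M := spectrum.isUnit_of_zero_notMem ℝ fun h ↦ by linarith [hspec 0 h]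
  rw [nonsing_inv_eq_ringInverse, ← cfc_ringInverse_id (R := ℝ) M hunit]
  refine (cfc_le_one_iff (fun x : ℝ ↦ x⁻¹) M (continuousOn_inv₀.mono fun x hx ↦ ?_)).2
    fun x hx ↦ inv_le_one_of_one_le₀ (hspec x hx)
  exact (zero_lt_one.trans_le (hspec x hx)).ne'

theorem PosDef.inv_anti {A B : Matrix n n 𝕜} (hA : A.PosDef) (hAB : A ≤ B) : B⁻¹ ≤ A⁻¹ := by
  obtain ⟨R, hRsa, hRdet, rfl⟩ := hA.exists_isSelfAdjoint_mul_self_eq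
  have hTsa : IsSelfAdjoint R⁻¹ := IsHermitian.inv hRsa
  have hTdet : IsUnit R⁻¹.det := isUnit_nonsing_inv_det_iff.2 hRdet
  have hM : 1 ≤ R⁻¹ * B * R⁻¹ :=
    inv_mul_mul_self_mul_inv hRdet ▸ hTsa.conjugate_le_conjugate hAB
  calc B⁻¹ = R⁻¹ * (R⁻¹ * B * R⁻¹)⁻¹ * R⁻¹ := inv_eq_mul_inv_conj_mul hTdet B
    _ ≤ R⁻¹ * 1 * R⁻¹ := hTsa.conjugate_le_conjugate (inv_le_one_of_one_le hM)
    _ = (R * R)⁻¹ := by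
      rw [inv_eq_mul_inv_conj_mul hTdet (R * R), inv_mul_mul_self_mul_inv hRdet, inv_one]

theorem algebraMap_det_le_of_nonneg_of_le_one {N : Matrix n n ℝ} (h0 : 0 ≤ N) (h1 : N ≤ 1) :
    algebraMap ℝ _ N.det ≤ N := by
  have hN : N.IsHermitian := (nonneg_iff_posSemidef.1 h0).isHermitian
  have hμ0 (j : n) : 0 ≤ hN.eigenvalues j :=
    spectrum_nonneg_of_nonneg h0 (hN.eigenvalues_mem_spectrum_real j)
  have hμ1 (j : n) : hN.eigenvalues j ≤ 1 :=
    (CFC.le_one_iff N).1 h1 _ (hN.eigenvalues_mem_spectrum_real j)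
  rw [algebraMap_le_iff_le_spectrum, hN.spectrum_real_eq_range_eigenvalues]
  rintro _ ⟨i, rfl⟩
  simpa [hN.det_eq_prod_eigenvalues] using
    Finset.prod_le_prod_of_subset_of_le_one (Finset.singleton_subset_iff.2 (Finset.mem_univ i))
      (fun j _ ↦ hμ0 j) (fun j _ _ ↦ hμ1 j)

theorem PosDef.det_div_det_smul_le {A B : Matrix n n ℝ} (hA : A.PosDef) (hB : 0 ≤ B)
    (hBA : B ≤ A) : (B.det / A.det) • A ≤ B := by
  obtain ⟨R, hRsa, hRdet, rfl⟩ := hA.exists_isSelfAdjoint_mul_self_eq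
  have hTsa : IsSelfAdjoint R⁻¹ := IsHermitian.inv hRsa
  set N := R⁻¹ * B * R⁻¹ with hN
  have hN0 : 0 ≤ N := hTsa.conjugate_nonneg hB
  have hN1 : N ≤ 1 := inv_mul_mul_self_mul_inv hRdet ▸ hTsa.conjugate_le_conjugate hBA
  have hdet : N.det = B.det / (R * R).det := by
    simp only [hN, det_mul, det_nonsing_inv, Ring.inverse_eq_inv]
    field_simp [hRdet.ne_zero]
  calc (B.det / (R * R).det) • (R * R) = R * algebraMap ℝ _ N.det * R := by
        rw [hdet, Algebra.algebraMap_eq_smul_one, mul_smul_comm, mul_one, smul_mul_assoc]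
    _ ≤ R * N * R := hRsa.conjugate_le_conjugate (algebraMap_det_le_of_nonneg_of_le_one hN0 hN1)
    _ = B := by
      rw [hN, ← mul_assoc, ← mul_assoc, mul_nonsing_inv _ hRdet, one_mul,
        nonsing_inv_mul_cancel_right _ _ hRdet]

end Matrix

theorem stmt_3_general {d : ℕ} (A B : Matrix (Fin d) (Fin d) ℝ)
    (hA : A.PosDef) (hB : B.PosDef) (hBA : (A - B).PosSemidef)
    (α : ℝ) (hdet : A.det ≤ α * B.det) :
    ∀ x : Fin d → ℝ, x ⬝ᵥ (B⁻¹).mulVec x ≤ α * (x ⬝ᵥ (A⁻¹).mulVec x) := by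
  have hα : 0 < α := pos_of_mul_pos_left (hA.det_pos.trans_le hdet) hB.det_pos.le
  have hαA : α⁻¹ • A ≤ B := by
    refine le_trans ?_ (hA.det_div_det_smul_le hB.posSemidef.nonneg (Matrix.le_iff.2 hBA))
    gcongr
    · exact hA.posSemidef.nonneg
    · rw [le_div_iff₀ hA.det_pos, inv_mul_le_iff₀ hα]
      exact hdet
  have hsmul_inv : (α⁻¹ • A)⁻¹ = α • A⁻¹ := by
    refine inv_eq_left_inv ?_
    rw [smul_mul_smul_comm, mul_inv_cancel₀ hα.ne', one_smul,
      nonsing_inv_mul _ hA.det_pos.ne'.isUnit]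
  have hinv : B⁻¹ ≤ α • A⁻¹ := hsmul_inv ▸ (hA.smul (inv_pos.2 hα)).inv_anti hαA
  intro x
  have hquad := (Matrix.le_iff.1 hinv).dotProduct_mulVec_nonneg x
  simp only [sub_mulVec, dotProduct_sub, smul_mulVec, dotProduct_smul, star_trivial,
    smul_eq_mul] at hquad
  linarith

/-- If `B ⪯ A` are symmetric positive definite and `det A ≤ α · det B` with `α ≥ 1`,
then `xᵀ B⁻¹ x ≤ α · xᵀ A⁻¹ x` for every `x` (Lemma 12 of Abbasi-Yadkori et al. 2011). -/
theorem stmt_3 {d : ℕ} (A B : Matrix (Fin d) (Fin d) ℝ)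
    (hA : A.PosDef) (hB : B.PosDef) (hBA : (A - B).PosSemidef)
    (α : ℝ) (hα : 1 ≤ α) (hdet : A.det ≤ α * B.det) :
    ∀ x : Fin d → ℝ, x ⬝ᵥ (B⁻¹).mulVec x ≤ α * (x ⬝ᵥ (A⁻¹).mulVec x) :=
  stmt_3_general A B hA hB hBA α hdet
end

section
/- Under the conditions V_a, V_b ⪰ λI symmetric, symmetric perturbations E_a, E_b of operator norm at most η, ρ := η/λ < 1, and writing g := λ_max(V_a^{-1/2} V_b V_a^{-1/2}) and g̃ := λ_max(Ṽ_a^{-1/2} Ṽ_b Ṽ_a^{-1/2}) where Ṽ = V + E, one has c_ρ^{-1} · g ≤ g̃ ≤ c_ρ · g, where c_ρ = (1+ρ)/(1−ρ). -/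
/-!
Conjugating by `V_a^{1/2}` shows that `λ_max(V_a^{-1/2} V_b V_a^{-1/2})` is the least
`c ≥ 0` with `V_b ⪯ c V_a` in the Loewner order. From `±E ⪯ η I ⪯ ρ V` we get
`(1 - ρ) V ⪯ V + E ⪯ (1 + ρ) V`, so `Ṽ_b ⪯ (1 + ρ) V_b ⪯ (1 + ρ) g V_a ⪯ c_ρ g Ṽ_a`, i.e.
`g̃ ≤ c_ρ g`; symmetrically `V_b ⪯ (1 - ρ)⁻¹ Ṽ_b ⪯ (1 - ρ)⁻¹ g̃ Ṽ_a ⪯ c_ρ g̃ V_a`.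
-/

open Matrix

section OldSqrt

open scoped ComplexOrder

/-- The old Mathlib `Matrix.PosSemidef.sqrt` (removed upstream), with its original definition. -/
noncomputable def Matrix.PosSemidef.sqrt {n : Type*} [Fintype n] [DecidableEq n] {𝕜 : Type*} [RCLike 𝕜]
    {A : Matrix n n 𝕜} (hA : A.PosSemidef) : Matrix n n 𝕜 :=
  hA.1.eigenvectorUnitary.1 * diagonal ((↑) ∘ (√·) ∘ hA.1.eigenvalues) *
    (star hA.1.eigenvectorUnitary : Matrix n n 𝕜)

end OldSqrt

open scoped MatrixOrder ComplexOrder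

section OrderedModule

variable {M : Type*} [AddCommGroup M] [PartialOrder M] [Module ℝ M] {I V E : M} {lam η : ℝ}

lemma sub_smul_le_add [IsOrderedAddMonoid M] (hV : lam • I ≤ V) (hE : -(η • I) ≤ E) :
    (lam - η) • I ≤ V + E := by
  rw [sub_smul, sub_eq_add_neg]
  exact add_le_add hV hE

variable [PosSMulMono ℝ M]

lemma le_div_smul_of_le_smul (hlam : 0 < lam) (hη : 0 ≤ η) (hV : lam • I ≤ V)
    (hE : E ≤ η • I) : E ≤ (η / lam) • V :=
  calc E ≤ η • I := hE
    _ = (η / lam) • lam • I := by rw [smul_smul, div_mul_cancel₀ _ hlam.ne']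
    _ ≤ (η / lam) • V := smul_le_smul_of_nonneg_left hV (by positivity)

lemma add_le_one_add_div_smul [IsOrderedAddMonoid M] (hlam : 0 < lam) (hη : 0 ≤ η)
    (hV : lam • I ≤ V) (hE : E ≤ η • I) : V + E ≤ (1 + η / lam) • V := by
  rw [add_smul, one_smul]
  exact add_le_add le_rfl (le_div_smul_of_le_smul hlam hη hV hE)

lemma le_one_sub_div_inv_smul_add [IsOrderedAddMonoid M] [PosSMulReflectLE ℝ M]
    (hlam : 0 < lam) (hη : 0 ≤ η) (hηlam : η < lam) (hV : lam • I ≤ V)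
    (hE : -(η • I) ≤ E) :
    V ≤ (1 - η / lam)⁻¹ • (V + E) := by
  rw [le_inv_smul_iff_of_pos (by rwa [sub_pos, div_lt_one hlam]), sub_smul, one_smul,
    sub_eq_add_neg]
  exact add_le_add le_rfl (neg_le.mp (le_div_smul_of_le_smul hlam hη hV (neg_le.mp hE)))

lemma le_mul_mul_smul_of_le_smul {A A' B B' : M} {a b g : ℝ} (hb : 0 ≤ b) (hg : 0 ≤ g)
    (hB : B' ≤ b • B) (hBA : B ≤ g • A) (hA : A ≤ a • A') : B' ≤ (b * g * a) • A' :=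
  calc B' ≤ b • B := hB
    _ ≤ b • g • A := smul_le_smul_of_nonneg_left hBA hb
    _ ≤ b • g • a • A' :=
      smul_le_smul_of_nonneg_left (smul_le_smul_of_nonneg_left hA hg) hb
    _ = (b * g * a) • A' := by rw [smul_smul, smul_smul]

end OrderedModule

namespace Matrix

variable {n 𝕜 : Type*} [DecidableEq n] [RCLike 𝕜]

lemma posDef_of_smul_one_le {A : Matrix n n 𝕜} {c : ℝ} (hc : 0 < c) (h : c • 1 ≤ A) :
    A.PosDef := by
  simpa using (PosDef.one.smul hc).add_posSemidef h

variable [Fintype n]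

lemma PosSemidef.sqrt_eq_cfcSqrt {A : Matrix n n 𝕜} (hA : A.PosSemidef) :
    hA.sqrt = CFC.sqrt A := by
  rw [CFC.sqrt_eq_cfc, cfc_nnreal_eq_real _ A, hA.1.cfc_eq]
  simp only [IsHermitian.cfc, Matrix.PosSemidef.sqrt]
  congr 3
  funext i
  simp [max_eq_left (hA.eigenvalues_nonneg i)]

lemma IsHermitian.le_smul_one_iff {G : Matrix n n 𝕜} (hG : G.IsHermitian) (c : ℝ) :
    G ≤ c • 1 ↔ ∀ i, hG.eigenvalues i ≤ c := by
  rw [← Algebra.algebraMap_eq_smul_one, le_algebraMap_iff_spectrum_le hG.isSelfAdjoint,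
    hG.spectrum_real_eq_range_eigenvalues, Set.forall_mem_range]

lemma inv_mul_mul_inv_le_smul_one_iff {S B : Matrix n n 𝕜} (hS : IsSelfAdjoint S)
    (hSu : IsUnit S) (c : ℝ) : S⁻¹ * B * S⁻¹ ≤ c • 1 ↔ B ≤ c • (S * S) := by
  have hdet : IsUnit S.det := (isUnit_iff_isUnit_det S).mp hSu
  have hSinv : IsSelfAdjoint S⁻¹ := (isHermitian_iff_isSelfAdjoint.mpr hS).inv
  constructor
  · intro h
    simpa [Matrix.mul_assoc, nonsing_inv_mul _ hdet, mul_nonsing_inv_cancel_left _ _ hdet]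
      using hS.conjugate_le_conjugate h
  · intro h
    simpa [Matrix.mul_assoc, mul_nonsing_inv _ hdet, nonsing_inv_mul_cancel_left _ _ hdet]
      using hSinv.conjugate_le_conjugate h

namespace PosSemidef

variable {A B : Matrix n n 𝕜} (hA : A.PosSemidef)
include hA

lemma isSelfAdjoint_sqrt : IsSelfAdjoint hA.sqrt :=
  hA.sqrt_eq_cfcSqrt ▸ (CFC.sqrt_nonneg A).isSelfAdjoint

lemma sqrt_mul_self : hA.sqrt * hA.sqrt = A :=
  hA.sqrt_eq_cfcSqrt ▸ CFC.sqrt_mul_sqrt_self A hA.nonneg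

lemma isUnit_sqrt (hAu : IsUnit A) : IsUnit hA.sqrt :=
  hA.sqrt_eq_cfcSqrt ▸ (CFC.isUnit_sqrt_iff A hA.nonneg).mpr hAu

variable (hG : (hA.sqrt⁻¹ * B * hA.sqrt⁻¹).IsHermitian)

lemma eigenvalues_le_iff_le_smul (hAu : IsUnit A) (c : ℝ) :
    (∀ i, hG.eigenvalues i ≤ c) ↔ B ≤ c • A := by
  rw [← hG.le_smul_one_iff,
    inv_mul_mul_inv_le_smul_one_iff hA.isSelfAdjoint_sqrt (hA.isUnit_sqrt hAu), hA.sqrt_mul_self]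

lemma le_iSup_eigenvalues_smul (hAu : IsUnit A) : B ≤ (⨆ i, hG.eigenvalues i) • A :=
  (hA.eigenvalues_le_iff_le_smul hG hAu _).mp
    fun i => le_ciSup (Set.finite_range _).bddAbove i

lemma iSup_eigenvalues_le_of_le_smul (hAu : IsUnit A) {c : ℝ} (hc : 0 ≤ c) (h : B ≤ c • A) :
    (⨆ i, hG.eigenvalues i) ≤ c :=
  Real.iSup_le ((hA.eigenvalues_le_iff_le_smul hG hAu c).mpr h) hc

lemma iSup_eigenvalues_nonneg (hB : 0 ≤ B) : 0 ≤ ⨆ i, hG.eigenvalues i := by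
  have hSinv : IsSelfAdjoint hA.sqrt⁻¹ :=
    (isHermitian_iff_isSelfAdjoint.mpr hA.isSelfAdjoint_sqrt).inv.isSelfAdjoint
  have hG0 : 0 ≤ hA.sqrt⁻¹ * B * hA.sqrt⁻¹ := hSinv.conjugate_nonneg hB
  exact Real.iSup_nonneg hG0.posSemidef.eigenvalues_nonneg

end PosSemidef

end Matrix

theorem stmt_6_general {d : ℕ} (Va Vb Ea Eb : Matrix (Fin d) (Fin d) ℝ)
    (lam η : ℝ) (hlam : 0 < lam) (hη : 0 ≤ η)
    (hVal : (Va - lam • (1 : Matrix (Fin d) (Fin d) ℝ)).PosSemidef)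
    (hVbl : (Vb - lam • (1 : Matrix (Fin d) (Fin d) ℝ)).PosSemidef)
    (hEa1 : (η • (1 : Matrix (Fin d) (Fin d) ℝ) - Ea).PosSemidef)
    (hEa2 : (Ea + η • (1 : Matrix (Fin d) (Fin d) ℝ)).PosSemidef)
    (hEb1 : (η • (1 : Matrix (Fin d) (Fin d) ℝ) - Eb).PosSemidef)
    (hEb2 : (Eb + η • (1 : Matrix (Fin d) (Fin d) ℝ)).PosSemidef)
    (ρ cρ : ℝ) (hρ : ρ = η / lam) (hρ1 : ρ < 1) (hcρ : cρ = (1 + ρ) / (1 - ρ))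
    (hVaP : Va.PosSemidef) (htaP : (Va + Ea).PosSemidef)
    (G Gt : Matrix (Fin d) (Fin d) ℝ)
    (hG : G = (hVaP.sqrt)⁻¹ * Vb * (hVaP.sqrt)⁻¹)
    (hGt : Gt = (htaP.sqrt)⁻¹ * (Vb + Eb) * (htaP.sqrt)⁻¹)
    (hGH : G.IsHermitian) (hGtH : Gt.IsHermitian)
    (g gt : ℝ) (hg : g = ⨆ i, hGH.eigenvalues i) (hgt : gt = ⨆ i, hGtH.eigenvalues i) :
    cρ⁻¹ * g ≤ gt ∧ gt ≤ cρ * g := by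
  subst hρ hcρ hG hGt hg hgt
  have hηlam : η < lam := (div_lt_one hlam).mp hρ1
  have hEa_ge : -(η • 1) ≤ Ea := by rwa [le_iff, sub_neg_eq_add]
  have hEb_ge : -(η • 1) ≤ Eb := by rwa [le_iff, sub_neg_eq_add]
  have hVaU : IsUnit Va := (posDef_of_smul_one_le hlam hVal).isUnit
  have htaU : IsUnit (Va + Ea) :=
    (posDef_of_smul_one_le (sub_pos.mpr hηlam) (sub_smul_le_add hVal hEa_ge)).isUnit
  have hVb0 : 0 ≤ Vb := (posDef_of_smul_one_le hlam hVbl).posSemidef.nonneg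
  have htb0 : 0 ≤ Vb + Eb :=
    (posDef_of_smul_one_le (sub_pos.mpr hηlam) (sub_smul_le_add hVbl hEb_ge)).posSemidef.nonneg
  have hg0 := hVaP.iSup_eigenvalues_nonneg hGH hVb0
  have hgt0 := htaP.iSup_eigenvalues_nonneg hGtH htb0
  have hρ0 : 0 ≤ η / lam := by positivity
  have h1ρ : 0 < 1 - η / lam := by linarith
  have hc : 0 ≤ (1 + η / lam) / (1 - η / lam) := by positivity
  constructor
  · rw [inv_mul_le_iff₀ (by positivity)]
    refine hVaP.iSup_eigenvalues_le_of_le_smul hGH hVaU (mul_nonneg hc hgt0) ?_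
    have key := le_mul_mul_smul_of_le_smul (inv_nonneg.mpr h1ρ.le) hgt0
      (le_one_sub_div_inv_smul_add hlam hη hηlam hVbl hEb_ge)
      (htaP.le_iSup_eigenvalues_smul hGtH htaU)
      (add_le_one_add_div_smul hlam hη hVal hEa1)
    rwa [div_eq_inv_mul, mul_right_comm]
  · refine htaP.iSup_eigenvalues_le_of_le_smul hGtH htaU (mul_nonneg hc hg0) ?_
    have key := le_mul_mul_smul_of_le_smul (by positivity) hg0
      (add_le_one_add_div_smul hlam hη hVbl hEb1)
      (hVaP.le_iSup_eigenvalues_smul hGH hVaU)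
      (le_one_sub_div_inv_smul_add hlam hη hηlam hVal hEa_ge)
    rwa [div_eq_mul_inv, mul_right_comm]

/-- Two-sided comparison of `λ_max(V_a^{-1/2} V_b V_a^{-1/2})` between the private and
non-private matrices: `c_ρ⁻¹ · g ≤ g̃ ≤ c_ρ · g`. -/
theorem stmt_6 {d : ℕ} (Va Vb Ea Eb : Matrix (Fin d) (Fin d) ℝ)
    (hVa : Va.IsHermitian) (hVb : Vb.IsHermitian)
    (hEa : Ea.IsHermitian) (hEb : Eb.IsHermitian)
    (lam η : ℝ) (hlam : 0 < lam) (hη : 0 ≤ η)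
    (hVal : (Va - lam • (1 : Matrix (Fin d) (Fin d) ℝ)).PosSemidef)
    (hVbl : (Vb - lam • (1 : Matrix (Fin d) (Fin d) ℝ)).PosSemidef)
    (hEa1 : (η • (1 : Matrix (Fin d) (Fin d) ℝ) - Ea).PosSemidef)
    (hEa2 : (Ea + η • (1 : Matrix (Fin d) (Fin d) ℝ)).PosSemidef)
    (hEb1 : (η • (1 : Matrix (Fin d) (Fin d) ℝ) - Eb).PosSemidef)
    (hEb2 : (Eb + η • (1 : Matrix (Fin d) (Fin d) ℝ)).PosSemidef)
    (ρ cρ : ℝ) (hρ : ρ = η / lam) (hρ1 : ρ < 1) (hcρ : cρ = (1 + ρ) / (1 - ρ))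
    (hVaP : Va.PosSemidef) (htaP : (Va + Ea).PosSemidef)
    (G Gt : Matrix (Fin d) (Fin d) ℝ)
    (hG : G = (hVaP.sqrt)⁻¹ * Vb * (hVaP.sqrt)⁻¹)
    (hGt : Gt = (htaP.sqrt)⁻¹ * (Vb + Eb) * (htaP.sqrt)⁻¹)
    (hGH : G.IsHermitian) (hGtH : Gt.IsHermitian)
    (g gt : ℝ) (hg : g = ⨆ i, hGH.eigenvalues i) (hgt : gt = ⨆ i, hGtH.eigenvalues i) :
    cρ⁻¹ * g ≤ gt ∧ gt ≤ cρ * g :=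
  stmt_6_general Va Vb Ea Eb lam η hlam hη hVal hVbl hEa1 hEa2 hEb1 hEb2 ρ cρ hρ hρ1 hcρ hVaP htaP G
    Gt hG hGt hGH hGtH g gt hg hgt
end

section
/- Let V_t = λI + Σ_{s=1}^{t} x_s x_sᵀ for vectors x_s with ‖x_s‖₂ ≤ L and λ > 0. If τ_1 < τ_2 < … < τ_m ≤ T are indices such that det(V_{τ_{k+1}})/det(V_{τ_k}) > γ for every k and some γ > 1, then m ≤ 1 + d·log(1 + T L²/(λ d))/log γ. -/
/-!
Each update multiplies `det V` by more than `γ`, and `det V_t ≥ λ^d` since `V_t ⪰ λ I`; hence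
`det V_{τ_m} ≥ λ^d γ^(m-1)`. On the other hand `V_t` is positive semidefinite with trace at most
`λ d + T L²`, so AM–GM on its eigenvalues gives `det V_t ≤ (λ + T L²/d)^d`. Comparing the two
bounds and taking logarithms yields the claim.
-/

open Matrix Finset

lemma Matrix.IsHermitian.det_cfc {n : Type*} [Fintype n] [DecidableEq n] {A : Matrix n n ℝ}
    (hA : A.IsHermitian) (f : ℝ → ℝ) : (cfc f A).det = ∏ i, f (hA.eigenvalues i) := by
  rw [hA.cfc_eq]
  simp [IsHermitian.cfc, -Unitary.conjStarAlgAut_apply]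

lemma Matrix.PosSemidef.pow_card_le_det_smul_one_add {n : Type*} [Fintype n] [DecidableEq n]
    {S : Matrix n n ℝ} (hS : S.PosSemidef) {c : ℝ} (hc : 0 ≤ c) :
    c ^ Fintype.card n ≤ (c • (1 : Matrix n n ℝ) + S).det := by
  have : IsSelfAdjoint S := hS.isHermitian.isSelfAdjoint
  have hcfc : c • (1 : Matrix n n ℝ) + S = cfc (fun x => c + x) S := by
    rw [cfc_const_add c (fun x => x) S, cfc_id' ℝ S, Algebra.algebraMap_eq_smul_one]
  rw [hcfc, hS.isHermitian.det_cfc]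
  calc c ^ Fintype.card n = ∏ _i : n, c := by simp
    _ ≤ _ := prod_le_prod (fun _ _ => hc) fun i _ =>
        le_add_of_nonneg_right (hS.eigenvalues_nonneg i)

theorem Real.prod_le_sum_div_card_pow {ι : Type*} (s : Finset ι) {z : ι → ℝ}
    (hz : ∀ i ∈ s, 0 ≤ z i) : ∏ i ∈ s, z i ≤ ((∑ i ∈ s, z i) / #s) ^ #s := by
  rcases s.eq_empty_or_nonempty with rfl | hs
  · simp
  have hcard : (0 : ℝ) < #s := by exact_mod_cast hs.card_pos
  have amgm := Real.geom_mean_le_arith_mean s (fun _ => 1) z (fun _ _ => zero_le_one)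
    (by simpa using hcard) hz
  simp only [Real.rpow_one, sum_const, nsmul_eq_mul, mul_one, one_mul] at amgm
  calc ∏ i ∈ s, z i = ((∏ i ∈ s, z i) ^ (#s : ℝ)⁻¹) ^ #s := by
        rw [← Real.rpow_natCast, ← Real.rpow_mul (prod_nonneg hz), inv_mul_cancel₀ hcard.ne',
          Real.rpow_one]
    _ ≤ _ := pow_le_pow_left₀ (Real.rpow_nonneg (prod_nonneg hz) _) amgm _

lemma Matrix.PosSemidef.det_le_trace_div_card_pow {n : Type*} [Fintype n] [DecidableEq n]
    {A : Matrix n n ℝ} (hA : A.PosSemidef) :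
    A.det ≤ (A.trace / Fintype.card n) ^ Fintype.card n := by
  rw [hA.isHermitian.det_eq_prod_eigenvalues, hA.isHermitian.trace_eq_sum_eigenvalues]
  simpa using Real.prod_le_sum_div_card_pow univ fun i _ => hA.eigenvalues_nonneg i

section Gram

variable {ι n : Type*} [Fintype n] (s : Finset ι) (x : ι → n → ℝ)

lemma Matrix.posSemidef_sum_vecMulVec_self :
    (∑ i ∈ s, vecMulVec (x i) (x i)).PosSemidef :=
  posSemidef_sum s fun i _ => by simpa using posSemidef_vecMulVec_self_star (x i)

lemma Matrix.trace_sum_vecMulVec_self_le {L : ℝ} (hx : ∀ i ∈ s, √(x i ⬝ᵥ x i) ≤ L) :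
    (∑ i ∈ s, vecMulVec (x i) (x i)).trace ≤ #s * L ^ 2 := by
  rw [trace_sum]
  calc ∑ i ∈ s, (vecMulVec (x i) (x i)).trace ≤ ∑ _i ∈ s, L ^ 2 :=
        sum_le_sum fun i hi => (trace_vecMulVec _ _).trans_le (Real.sqrt_le_iff.mp (hx i hi)).2
    _ = #s * L ^ 2 := by rw [sum_const, nsmul_eq_mul]

lemma Matrix.det_smul_one_add_sum_vecMulVec_self_le [DecidableEq n] {c L : ℝ} (hc : 0 ≤ c)
    (hx : ∀ i ∈ s, √(x i ⬝ᵥ x i) ≤ L) :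
    (c • (1 : Matrix n n ℝ) + ∑ i ∈ s, vecMulVec (x i) (x i)).det
      ≤ (c + #s * L ^ 2 / Fintype.card n) ^ Fintype.card n := by
  have hpsd := (PosSemidef.one.smul hc).add (posSemidef_sum_vecMulVec_self s x)
  refine hpsd.det_le_trace_div_card_pow.trans (pow_le_pow_left₀ ?_ ?_ _)
  · exact div_nonneg hpsd.trace_nonneg (Nat.cast_nonneg _)
  rcases isEmpty_or_nonempty n with hn | hn
  · simp [hc]
  rw [trace_add, trace_smul, trace_one, smul_eq_mul, add_div,
    mul_div_cancel_right₀ c (Nat.cast_ne_zero.mpr Fintype.card_ne_zero)]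
  gcongr
  exact trace_sum_vecMulVec_self_le s x hx

end Gram

lemma mul_pow_le_of_mul_le_succ {m : ℕ} {f : Fin m → ℝ} {a γ : ℝ} (hγ : 0 ≤ γ)
    (ha : ∀ k, a ≤ f k) (hgrow : ∀ k : Fin m, ∀ hk : (k : ℕ) + 1 < m, γ * f k ≤ f ⟨k + 1, hk⟩)
    (k : Fin m) : a * γ ^ (k : ℕ) ≤ f k := by
  obtain ⟨k, hk⟩ := k
  induction k with
  | zero => simpa using ha _
  | succ k ih =>
    calc a * γ ^ (k + 1) = γ * (a * γ ^ k) := by ring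
      _ ≤ γ * f ⟨k, by omega⟩ := mul_le_mul_of_nonneg_left (ih (by omega)) hγ
      _ ≤ _ := hgrow ⟨k, by omega⟩ hk

lemma le_one_add_log_div_log_of_mul_le_succ {m : ℕ} {f : Fin m → ℝ} {a b γ : ℝ} (ha : 0 < a)
    (hab : a ≤ b) (hγ : 1 < γ) (hlow : ∀ k, a ≤ f k) (hup : ∀ k, f k ≤ b)
    (hgrow : ∀ k : Fin m, ∀ hk : (k : ℕ) + 1 < m, γ * f k ≤ f ⟨k + 1, hk⟩) :
    (m : ℝ) ≤ 1 + Real.log (b / a) / Real.log γ := by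
  have hlogγ : 0 < Real.log γ := Real.log_pos hγ
  rcases Nat.eq_zero_or_pos m with rfl | hm
  · have := Real.log_nonneg ((one_le_div ha).mpr hab)
    simp only [Nat.cast_zero]
    positivity
  have hpow : γ ^ (m - 1) ≤ b / a := by
    rw [le_div_iff₀' ha]
    exact (mul_pow_le_of_mul_le_succ (by positivity) hlow hgrow ⟨m - 1, by omega⟩).trans (hup _)
  have hlog : ((m - 1 : ℕ) : ℝ) * Real.log γ ≤ Real.log (b / a) := by
    simpa only [Real.log_pow] using Real.log_le_log (by positivity) hpow
  rw [Nat.cast_sub hm, Nat.cast_one, ← le_div_iff₀ hlogγ] at hlog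
  linarith

theorem stmt_11_general {d T : ℕ} (x : ℕ → Fin d → ℝ) (L lam γ : ℝ)
    (hlam : 0 < lam) (hγ : 1 < γ)
    (hx : ∀ s, Real.sqrt (x s ⬝ᵥ x s) ≤ L)
    (V : ℕ → Matrix (Fin d) (Fin d) ℝ)
    (hV : ∀ t, V t = lam • (1 : Matrix (Fin d) (Fin d) ℝ)
        + ∑ s ∈ Finset.range t, vecMulVec (x s) (x s))
    (m : ℕ) (τ : Fin m → ℕ) (hτT : ∀ k, τ k ≤ T)
    (hgrow : ∀ k : Fin m, ∀ hk : (k : ℕ) + 1 < m,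
      γ * (V (τ k)).det < (V (τ ⟨(k : ℕ) + 1, hk⟩)).det) :
    (m : ℝ) ≤ 1 + d * Real.log (1 + T * L ^ 2 / (lam * d)) / Real.log γ := by
  set q := T * L ^ 2 / (lam * d)
  have hdet_ge (t : ℕ) : lam ^ d ≤ (V t).det := by
    simpa [hV] using (posSemidef_sum_vecMulVec_self (range t) x).pow_card_le_det_smul_one_add
      hlam.le
  have hdet_le (t : ℕ) (ht : t ≤ T) : (V t).det ≤ lam ^ d * (1 + q) ^ d :=
    calc (V t).det ≤ (lam + t * L ^ 2 / d) ^ d := by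
          simpa [hV] using det_smul_one_add_sum_vecMulVec_self_le (range t) x hlam.le
            fun s _ => hx s
      _ ≤ (lam + T * L ^ 2 / d) ^ d := by gcongr
      _ = lam ^ d * (1 + q) ^ d := by
          rw [← mul_pow, mul_add, mul_one, ← mul_div_assoc, mul_div_mul_left _ _ hlam.ne']
  have hlam_pow : 0 < lam ^ d := pow_pos hlam d
  have hrange : lam ^ d ≤ lam ^ d * (1 + q) ^ d :=
    le_mul_of_one_le_right hlam_pow.le (one_le_pow₀ (le_add_of_nonneg_right (by positivity)))
  have := le_one_add_log_div_log_of_mul_le_succ hlam_pow hrange hγ (fun k => hdet_ge (τ k))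
    (fun k => hdet_le _ (hτT k)) fun k hk => (hgrow k hk).le
  rwa [mul_div_cancel_left₀ _ hlam_pow.ne', Real.log_pow] at this

/-- Rare-switching count: if along update times the determinant grows by a factor `> γ`
each time, then the number of updates is at most `1 + d·log(1 + T L²/(λ d))/log γ`. -/
theorem stmt_11 {d T : ℕ} (hd : 0 < d) (x : ℕ → Fin d → ℝ) (L lam γ : ℝ)
    (hlam : 0 < lam) (hγ : 1 < γ)
    (hx : ∀ s, Real.sqrt (x s ⬝ᵥ x s) ≤ L)
    (V : ℕ → Matrix (Fin d) (Fin d) ℝ)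
    (hV : ∀ t, V t = lam • (1 : Matrix (Fin d) (Fin d) ℝ)
        + ∑ s ∈ Finset.range t, vecMulVec (x s) (x s))
    (m : ℕ) (τ : Fin m → ℕ) (hτmono : StrictMono τ) (hτT : ∀ k, τ k ≤ T)
    (hgrow : ∀ k : Fin m, ∀ hk : (k : ℕ) + 1 < m,
      γ * (V (τ k)).det < (V (τ ⟨(k : ℕ) + 1, hk⟩)).det) :
    (m : ℝ) ≤ 1 + d * Real.log (1 + T * L ^ 2 / (lam * d)) / Real.log γ :=
  stmt_11_general x L lam γ hlam hγ hx V hV m τ hτT hgrow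
end
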